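/- arXiv:1906.01591 — 5 statements merged into one kernel-verified Lean document; each statement's English description precedes it below -/
import Mathlib

section
/- Let G be a finite simple graph with Laplacian L and transition matrix U(t) = exp(itL). If there are distinct vertices c,d of G such that the pair state e_a − e_b (a ≠ b) has perfect pair state transfer to (c,d) at time τ, then (a,b) is periodic at time 2τ, i.e., U(2τ)(e_a − e_b) = γ(e_a − e_b) for some γ ∈ ℂ with |γ| = 1. -/
open Matrix

variable {V : Type*}

/-- The transition matrix `U(t) = exp(itL)` of the continuous quantum walk on `G`,
where `L` is the Laplacian of `G`. -/
noncomputable def transitionMatrix [Fintype V] [DecidableEq V] (G : SimpleGraph V)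
    [DecidableRel G.Adj] (t : ℝ) : Matrix V V ℂ :=
  NormedSpace.exp ((Complex.I * (t : ℂ)) • G.lapMatrix ℂ)

/-- The pair state `e_a - e_b`. -/
def pairState [DecidableEq V] (a b : V) : V → ℂ := Pi.single a 1 - Pi.single b 1

/-- Perfect pair state transfer from `(a,b)` to `(c,d)` at time `t`. -/
def PerfectPairStateTransfer [Fintype V] [DecidableEq V] (G : SimpleGraph V)
    [DecidableRel G.Adj] (t : ℝ) (a b c d : V) : Prop :=
  ∃ γ : ℂ, ‖γ‖ = 1 ∧
    (transitionMatrix G t).mulVec (pairState a b) = γ • pairState c d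


/-!
Since the Laplacian is real symmetric, `U(t)` is symmetric and unitary, so `U(t)⁻¹ = U(t)ᴴ` is
the entrywise conjugate of `U(t)`. For real vectors `v, w`, conjugating `U(t)ᴴ w = γ⁻¹ v` (which
follows from `U(t) v = γ w`) gives `U(t) w = γ v`, so a transfer `(a, b) → (c, d)` at time `τ` is
undone in the next `τ` time units: `U(2τ) v = U(τ) (γ w) = γ² v`.
-/

namespace Matrix

variable {n : Type*} [Fintype n] [DecidableEq n]

theorem IsSymm.mulVec_eq_smul_swap {U : Matrix n n ℂ} (hsymm : U.IsSymm)
    (hU : U ∈ unitary (Matrix n n ℂ)) {v w : n → ℂ} (hv : star v = v) (hw : star w = w)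
    {γ : ℂ} (hγ : ‖γ‖ = 1) (h : U *ᵥ v = γ • w) : U *ᵥ w = γ • v := by
  have hinv : γ • Uᴴ *ᵥ w = v := by
    rw [← mulVec_smul, ← h, mulVec_mulVec, ← star_eq_conjTranspose,
      Unitary.star_mul_self_of_mem hU, one_mulVec]
  have hconj : star (Uᴴ *ᵥ w) = U *ᵥ w := by
    rw [star_mulVec, hw, conjTranspose_conjTranspose, ← hsymm.eq, vecMul_transpose, hsymm.eq]
  have hγγ : γ * star γ = 1 := by
    rw [RCLike.star_def, RCLike.mul_conj, hγ]
    norm_num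
  calc U *ᵥ w = (γ * star γ) • U *ᵥ w := by rw [hγγ, one_smul]
    _ = γ • star (γ • Uᴴ *ᵥ w) := by rw [star_smul, hconj, smul_smul]
    _ = γ • v := by rw [hinv, hv]

end Matrix

section
variable [Fintype V] [DecidableEq V] (G : SimpleGraph V) [DecidableRel G.Adj]

theorem transitionMatrix_isSymm (t : ℝ) : (transitionMatrix G t).IsSymm :=
  ((G.isSymm_lapMatrix (R := ℂ)).smul _).exp

theorem transitionMatrix_zero : transitionMatrix G 0 = 1 := by
  simp [transitionMatrix]

theorem transitionMatrix_add (s t : ℝ) :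
    transitionMatrix G (s + t) = transitionMatrix G s * transitionMatrix G t := by
  rw [transitionMatrix, transitionMatrix, transitionMatrix,
    ← Matrix.exp_add_of_commute _ _ (((Commute.refl _).smul_left _).smul_right _), ← add_smul]
  push_cast
  ring_nf

theorem star_transitionMatrix (t : ℝ) : star (transitionMatrix G t) = transitionMatrix G (-t) := by
  rw [transitionMatrix, transitionMatrix, star_eq_conjTranspose, ← Matrix.exp_conjTranspose,
    conjTranspose_smul, (G.isHermitian_lapMatrix (R := ℂ)).eq]
  congr 2
  simp

theorem transitionMatrix_mem_unitary (t : ℝ) :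
    transitionMatrix G t ∈ unitary (Matrix V V ℂ) := by
  rw [Unitary.mem_iff, star_transitionMatrix, ← transitionMatrix_add, ← transitionMatrix_add,
    neg_add_cancel, add_neg_cancel, transitionMatrix_zero, and_self]

end

theorem star_pairState [DecidableEq V] (a b : V) : star (pairState a b) = pairState a b := by
  simp [pairState]

theorem pst_implies_periodic_general [Fintype V] [DecidableEq V] (G : SimpleGraph V)
    [DecidableRel G.Adj] (a b : V) (τ : ℝ)
    (h : ∃ c d : V, c ≠ d ∧ PerfectPairStateTransfer G τ a b c d) :
    PerfectPairStateTransfer G (2 * τ) a b a b := by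
  obtain ⟨c, d, -, γ, hγ, htransfer⟩ := h
  have hback : (transitionMatrix G τ) *ᵥ pairState c d = γ • pairState a b :=
    (transitionMatrix_isSymm G τ).mulVec_eq_smul_swap (transitionMatrix_mem_unitary G τ)
      (star_pairState a b) (star_pairState c d) hγ htransfer
  refine ⟨γ * γ, by rw [norm_mul, hγ, one_mul], ?_⟩
  rw [two_mul, transitionMatrix_add, ← mulVec_mulVec, htransfer, mulVec_smul, hback, smul_smul]

/-- If `e_a - e_b` has perfect pair state transfer to some `(c,d)` with `c ≠ d` at time `τ`,
then `(a,b)` is periodic at time `2τ`. -/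
theorem pst_implies_periodic [Fintype V] [DecidableEq V] (G : SimpleGraph V)
    [DecidableRel G.Adj] (a b : V) (hab : a ≠ b) (τ : ℝ)
    (h : ∃ c d : V, c ≠ d ∧ PerfectPairStateTransfer G τ a b c d) :
    PerfectPairStateTransfer G (2 * τ) a b a b :=
  pst_implies_periodic_general G a b τ h
end

section
/- If there is perfect pair state transfer between e_a − e_b and e_c − e_d in a finite simple graph G (at some time t, with a ≠ b and c ≠ d), then e_a − e_b and e_c − e_d are strongly cospectral: for every eigenvalue θ of the Laplacian L of G, the orthogonal projection E_θ onto the θ-eigenspace of L satisfies E_θ(e_a − e_b) = E_θ(e_c − e_d) or E_θ(e_a − e_b) = −E_θ(e_c − e_d). -/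
open Matrix

variable {V : Type*}

/-- `E` is the orthogonal projection onto the `θ`-eigenspace of `L`:
it is a self-adjoint idempotent whose range is contained in the `θ`-eigenspace
and which fixes every `θ`-eigenvector. -/
def IsEigenProj [Fintype V] [DecidableEq V] (L : Matrix V V ℂ) (θ : ℝ) (E : Matrix V V ℂ) :
    Prop :=
  E * E = E ∧ Eᴴ = E ∧ L * E = (θ : ℂ) • E ∧
    ∀ v : V → ℂ, L.mulVec v = (θ : ℂ) • v → E.mulVec v = v

/-!
`L` is real symmetric, so the `θ`-projection `E` commutes with `U(t) = exp(itL)`, and complex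
conjugation maps `E` to another `θ`-projection, hence to `E` itself: `E` is real. Applying `E` to
`U(t)(e_a - e_b) = γ (e_c - e_d)` gives `e^{itθ} E(e_a - e_b) = γ E(e_c - e_d)`, so the real vectors
`E(e_a - e_b)` and `E(e_c - e_d)` differ by a unimodular scalar, which must be `±1`.
-/

namespace Matrix

variable {m n : Type*} [Fintype n]

theorem star_mulVec_eq_map_star_mulVec {R : Type*} [CommSemiring R] [StarRing R]
    (M : Matrix m n R) (v : n → R) : star (M *ᵥ v) = M.map star *ᵥ star v := by
  funext i
  exact RingHom.map_mulVec (starRingEnd R) M v i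

theorem map_star_mul {o R : Type*} [CommSemiring R] [StarRing R] (M : Matrix m n R)
    (N : Matrix n o R) : (M * N).map star = M.map star * N.map star :=
  Matrix.map_mul (f := starRingEnd R)

section Exp

attribute [local instance] Matrix.linftyOpNormedRing Matrix.linftyOpNormedAlgebra

theorem exp_mulVec_of_mulVec_eq_smul {𝕂 : Type*} [RCLike 𝕂] [DecidableEq n]
    {A : Matrix n n 𝕂} {v : n → 𝕂} {c : 𝕂} (h : A *ᵥ v = c • v) :
    NormedSpace.exp A *ᵥ v = NormedSpace.exp c • v := by
  have hpow (k : ℕ) : A ^ k *ᵥ v = c ^ k • v := by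
    induction k with
    | zero => simp
    | succ k ih => rw [pow_succ', ← mulVec_mulVec, ih, mulVec_smul, h, smul_smul, pow_succ]
  have hA : HasSum (fun k ↦ ((k.factorial : 𝕂)⁻¹ • A ^ k) *ᵥ v) (NormedSpace.exp A *ᵥ v) :=
    (NormedSpace.exp_series_hasSum_exp' (𝕂 := 𝕂) A).map (mulVec.addMonoidHomLeft v)
      (continuous_id.matrix_mulVec continuous_const)
  have hc : HasSum (fun k ↦ ((k.factorial : 𝕂)⁻¹ • c ^ k) • v) (NormedSpace.exp c • v) :=
    (NormedSpace.exp_series_hasSum_exp' (𝕂 := 𝕂) c).smul_const v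
  refine hA.unique (hc.congr_fun fun k ↦ ?_)
  rw [smul_mulVec, hpow, smul_smul, smul_eq_mul]

end Exp

end Matrix

theorem SimpleGraph.map_star_lapMatrix {R : Type*} [NonAssocRing R] [StarRing R]
    (G : SimpleGraph V) [Fintype V] [DecidableEq V] [DecidableRel G.Adj] :
    (G.lapMatrix R).map star = G.lapMatrix R := by
  conv_lhs => rw [← G.isSymm_lapMatrix R]
  -- `Mᵀ.map star` is `Mᴴ` by definition
  exact G.isHermitian_lapMatrix R

theorem Complex.eq_one_or_eq_neg_one_of_star_eq {μ : ℂ} (hconj : star μ = μ) (hμ : ‖μ‖ = 1) :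
    μ = 1 ∨ μ = -1 := by
  obtain ⟨r, rfl⟩ := Complex.conj_eq_iff_real.mp hconj
  rw [Complex.norm_real, Real.norm_eq_abs] at hμ
  rcases abs_eq zero_le_one |>.mp hμ with rfl | rfl <;> simp

theorem eq_or_eq_neg_of_eq_smul {ι : Type*} {x y : ι → ℂ} {μ : ℂ} (hx : star x = x)
    (hy : star y = y) (hμ : ‖μ‖ = 1) (h : x = μ • y) : x = y ∨ x = -y := by
  obtain rfl | hy0 := eq_or_ne y 0
  · simp [h]
  obtain ⟨i, hi⟩ := Function.ne_iff.mp hy0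
  have hconj : star μ = μ := by
    have hxi : star (x i) = x i := congrFun hx i
    have hyi : star (y i) = y i := congrFun hy i
    rw [h, Pi.smul_apply, smul_eq_mul, star_mul', hyi] at hxi
    exact mul_right_cancel₀ hi hxi
  rcases Complex.eq_one_or_eq_neg_one_of_star_eq hconj hμ with rfl | rfl <;> simp [h]

namespace IsEigenProj

variable [Fintype V] [DecidableEq V] {L E F : Matrix V V ℂ} {θ : ℝ}

theorem mulVec_mulVec_eq_smul (hE : IsEigenProj L θ E) (v : V → ℂ) :
    L *ᵥ (E *ᵥ v) = (θ : ℂ) • (E *ᵥ v) := by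
  rw [mulVec_mulVec, hE.2.2.1, smul_mulVec]

theorem mul_eq_right (hE : IsEigenProj L θ E) (hF : IsEigenProj L θ F) : E * F = F :=
  ext_iff_mulVec.mpr fun v ↦ by
    rw [← mulVec_mulVec]
    exact hE.2.2.2 _ (hF.mulVec_mulVec_eq_smul v)

theorem unique (hE : IsEigenProj L θ E) (hF : IsEigenProj L θ F) : E = F :=
  calc E = (F * E)ᴴ := by rw [hF.mul_eq_right hE, hE.2.1]
    _ = E * F := by rw [conjTranspose_mul, hE.2.1, hF.2.1]
    _ = F := hE.mul_eq_right hF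

theorem commute (hL : L.IsHermitian) (hE : IsEigenProj L θ E) : Commute E L := by
  refine ((IsSelfAdjoint.commute_iff hL hE.2.1).mpr ?_).symm
  rw [hE.2.2.1]
  exact IsSelfAdjoint.smul (Complex.conj_ofReal θ) hE.2.1

theorem map_star (hL : L.map star = L) (hE : IsEigenProj L θ E) :
    IsEigenProj L θ (E.map star) := by
  obtain ⟨hidem, hadj, hLE, hfix⟩ := hE
  refine ⟨?_, ?_, ?_, fun v hv ↦ ?_⟩
  · rw [← map_star_mul, hidem]
  · rw [← conjTranspose_map star fun _ ↦ rfl, hadj]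
  · conv_lhs => rw [← hL]
    rw [← map_star_mul, hLE]
    ext i j
    simp
  · have hv' : L *ᵥ star v = (θ : ℂ) • star v := by
      rw [← hL, ← star_mulVec_eq_map_star_mulVec, hv, star_smul, Complex.star_def,
        Complex.conj_ofReal]
    rw [← star_star v, ← star_mulVec_eq_map_star_mulVec, hfix _ hv']

theorem map_star_eq (hL : L.map star = L) (hE : IsEigenProj L θ E) : E.map star = E :=
  (hE.map_star hL).unique hE

end IsEigenProj

section Transfer

variable [Fintype V] [DecidableEq V] {G : SimpleGraph V} [DecidableRel G.Adj]

theorem Commute.transitionMatrix_right {E : Matrix V V ℂ} (h : Commute E (G.lapMatrix ℂ))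
    (t : ℝ) : Commute E (transitionMatrix G t) :=
  (h.smul_right _).exp_right

theorem transitionMatrix_mulVec_of_mulVec_eq_smul {v : V → ℂ} {θ : ℂ}
    (h : G.lapMatrix ℂ *ᵥ v = θ • v) (t : ℝ) :
    transitionMatrix G t *ᵥ v = Complex.exp (Complex.I * t * θ) • v := by
  rw [Complex.exp_eq_exp_ℂ]
  refine Matrix.exp_mulVec_of_mulVec_eq_smul ?_
  rw [smul_mulVec, h, smul_smul]

theorem PerfectPairStateTransfer.exists_mulVec_eq_smul {t : ℝ} {a b c d : V} {θ : ℝ}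
    {E : Matrix V V ℂ} (h : PerfectPairStateTransfer G t a b c d)
    (hE : IsEigenProj (G.lapMatrix ℂ) θ E) :
    ∃ μ : ℂ, ‖μ‖ = 1 ∧ E *ᵥ pairState a b = μ • E *ᵥ pairState c d := by
  obtain ⟨γ, hγ, hU⟩ := h
  have hζ : ‖Complex.exp (Complex.I * t * θ)‖ = 1 := by
    rw [show Complex.I * t * θ = ((t * θ : ℝ) : ℂ) * Complex.I by push_cast; ring]
    exact Complex.norm_exp_ofReal_mul_I _
  set ζ := Complex.exp (Complex.I * t * θ)
  have hζ0 : ζ ≠ 0 := Complex.exp_ne_zero _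
  refine ⟨ζ⁻¹ * γ, by rw [norm_mul, norm_inv, hζ, hγ, inv_one, one_mul], ?_⟩
  have : ζ • E *ᵥ pairState a b = γ • E *ᵥ pairState c d := by
    rw [← transitionMatrix_mulVec_of_mulVec_eq_smul (hE.mulVec_mulVec_eq_smul _), mulVec_mulVec,
      ← (hE.commute (G.isHermitian_lapMatrix ℂ)).transitionMatrix_right t |>.eq, ← mulVec_mulVec,
      hU, mulVec_smul]
  rw [mul_smul, ← this, smul_smul, inv_mul_cancel₀ hζ0, one_smul]

end Transfer

theorem pst_strongly_cospectral_general [Fintype V] [DecidableEq V] (G : SimpleGraph V)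
    [DecidableRel G.Adj] (a b c d : V) (t : ℝ)
    (h : PerfectPairStateTransfer G t a b c d) :
    ∀ (θ : ℝ) (E : Matrix V V ℂ), IsEigenProj (G.lapMatrix ℂ) θ E →
      E.mulVec (pairState a b) = E.mulVec (pairState c d) ∨
        E.mulVec (pairState a b) = -E.mulVec (pairState c d) := by
  intro θ E hE
  obtain ⟨μ, hμ, hEμ⟩ := h.exists_mulVec_eq_smul hE
  have hreal (u w : V) : star (E *ᵥ pairState u w) = E *ᵥ pairState u w := by
    rw [star_mulVec_eq_map_star_mulVec, hE.map_star_eq G.map_star_lapMatrix, star_pairState]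
  exact eq_or_eq_neg_of_eq_smul (hreal a b) (hreal c d) hμ hEμ

/-- Perfect pair state transfer implies strong cospectrality. -/
theorem pst_strongly_cospectral [Fintype V] [DecidableEq V] (G : SimpleGraph V)
    [DecidableRel G.Adj] (a b c d : V) (hab : a ≠ b) (hcd : c ≠ d) (t : ℝ)
    (h : PerfectPairStateTransfer G t a b c d) :
    ∀ (θ : ℝ) (E : Matrix V V ℂ), IsEigenProj (G.lapMatrix ℂ) θ E →
      E.mulVec (pairState a b) = E.mulVec (pairState c d) ∨
        E.mulVec (pairState a b) = -E.mulVec (pairState c d) :=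
  pst_strongly_cospectral_general G a b c d t h
end

section
/- Let G be a connected finite simple graph that is edge-transitive (for any two edges of G there is an automorphism of G mapping one to the other as unordered pairs). Then for every edge {a,b} of G, the eigenvalue support of the edge state e_a − e_b consists exactly of all the nonzero eigenvalues of the Laplacian L of G. -/
/-!
For a `θ`-eigenvector `u`, self-adjointness of `E` and `E u = u` give
`⟪u, E (e_a - e_b)⟫ = conj (u a - u b)`; so `E (e_a - e_b) = 0` exactly when every
`θ`-eigenvector takes equal values at `a` and `b` (for the converse take `u = E (e_a - e_b)`).
For `θ = 0` this always holds, since the kernel of `L` consists of the vectors that are constant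
along edges. For `θ ≠ 0`, automorphisms permute the `θ`-eigenvectors, so by edge-transitivity a
`θ`-eigenvector that agrees at `a` and `b` is constant along every edge; it is then in the kernel
of `L`, hence zero.
-/

open Matrix

variable {V : Type*}

namespace SimpleGraph

variable {W : Type*} {G : SimpleGraph V}

variable (G) in
def IsEdgeTransitive : Prop :=
  ∀ e ∈ G.edgeSet, ∀ f ∈ G.edgeSet, ∃ σ : G ≃g G, Sym2.map σ e = f

theorem IsEdgeTransitive.eq_of_adj {α : Type*} {P : (V → α) → Prop} (hG : G.IsEdgeTransitive)
    (hP : ∀ (σ : G ≃g G) (u : V → α), P u → P (u ∘ σ)) {a b : V} (hab : G.Adj a b)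
    (h : ∀ u, P u → u a = u b) {u : V → α} (hu : P u) {c d : V} (hcd : G.Adj c d) :
    u c = u d := by
  obtain ⟨σ, hσ⟩ := hG s(a, b) hab s(c, d) hcd
  have hσab : u (σ a) = u (σ b) := h (u ∘ σ) (hP σ u hu)
  rcases Sym2.eq_iff.1 (Sym2.map_mk σ a b ▸ hσ) with ⟨rfl, rfl⟩ | ⟨rfl, rfl⟩
  exacts [hσab, hσab.symm]

variable [Fintype V] [DecidableRel G.Adj]

theorem Iso.degree_apply [Fintype W] {H : SimpleGraph W} [DecidableRel H.Adj] (σ : G ≃g H)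
    (v : V) : H.degree (σ v) = G.degree v := by
  rw [← card_neighborSet_eq_degree, ← card_neighborSet_eq_degree]
  exact (Fintype.card_congr (σ.mapNeighborSet v)).symm

variable [DecidableEq V]

section Iso

variable {R : Type*} [Ring R] [Fintype W] [DecidableEq W] {H : SimpleGraph W}
  [DecidableRel H.Adj]

theorem lapMatrix_submatrix_iso (σ : G ≃g H) :
    (H.lapMatrix R).submatrix σ σ = G.lapMatrix R := by
  ext i j
  by_cases h : i = j
  · subst h
    simp [lapMatrix, degMatrix, σ.degree_apply]
  · simp [lapMatrix, degMatrix, h, σ.injective.ne h, σ.map_adj_iff]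

theorem lapMatrix_mulVec_comp_iso (σ : G ≃g H) (x : W → R) :
    G.lapMatrix R *ᵥ (x ∘ σ) = (H.lapMatrix R *ᵥ x) ∘ σ := by
  rw [← lapMatrix_submatrix_iso σ, ← RelIso.coe_fn_toEquiv, submatrix_mulVec_equiv,
    Function.comp_assoc, Equiv.self_comp_symm, Function.comp_id]

end Iso

theorem re_lapMatrix_mulVec (x : V → ℂ) (i : V) :
    ((G.lapMatrix ℂ *ᵥ x) i).re = (G.lapMatrix ℝ *ᵥ fun j ↦ (x j).re) i := by
  simp [lapMatrix_mulVec_apply, Complex.re_sum]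

theorem im_lapMatrix_mulVec (x : V → ℂ) (i : V) :
    ((G.lapMatrix ℂ *ᵥ x) i).im = (G.lapMatrix ℝ *ᵥ fun j ↦ (x j).im) i := by
  simp [lapMatrix_mulVec_apply, Complex.im_sum]

variable (G) in
theorem lapMatrix_mulVec_eq_zero_iff_forall_adj_complex {x : V → ℂ} :
    G.lapMatrix ℂ *ᵥ x = 0 ↔ ∀ i j : V, G.Adj i j → x i = x j := by
  have hsplit : G.lapMatrix ℂ *ᵥ x = 0 ↔
      G.lapMatrix ℝ *ᵥ (fun j ↦ (x j).re) = 0 ∧ G.lapMatrix ℝ *ᵥ (fun j ↦ (x j).im) = 0 := by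
    simp only [funext_iff, Complex.ext_iff, re_lapMatrix_mulVec, im_lapMatrix_mulVec,
      Pi.zero_apply, Complex.zero_re, Complex.zero_im, forall_and]
  rw [hsplit, lapMatrix_mulVec_eq_zero_iff_forall_adj, lapMatrix_mulVec_eq_zero_iff_forall_adj]
  simp only [Complex.ext_iff, ← forall_and]

end SimpleGraph

theorem dotProduct_pairState [Fintype V] [DecidableEq V] (u : V → ℂ) (a b : V) :
    u ⬝ᵥ pairState a b = u a - u b := by
  simp [pairState, dotProduct_sub, dotProduct_single]

namespace IsEigenProj

open scoped ComplexOrder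

variable [Fintype V] [DecidableEq V] {L E : Matrix V V ℂ} {θ : ℝ}

theorem mulVec_eq_zero_iff (hE : IsEigenProj L θ E) (w : V → ℂ) :
    E *ᵥ w = 0 ↔ ∀ u, L *ᵥ u = (θ : ℂ) • u → star u ⬝ᵥ w = 0 := by
  obtain ⟨-, hEself, hLE, hEfix⟩ := hE
  have hpair : ∀ u, L *ᵥ u = (θ : ℂ) • u → star u ⬝ᵥ (E *ᵥ w) = star u ⬝ᵥ w := fun u hu ↦ by
    rw [dotProduct_mulVec, ← hEself, ← star_mulVec, hEfix u hu]
  refine ⟨fun h u hu ↦ by rw [← hpair u hu, h, dotProduct_zero], fun h ↦ ?_⟩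
  have hEw : L *ᵥ (E *ᵥ w) = (θ : ℂ) • (E *ᵥ w) := by rw [mulVec_mulVec, hLE, smul_mulVec]
  rw [← dotProduct_star_self_eq_zero, hpair _ hEw, h _ hEw]

theorem mulVec_pairState_eq_zero_iff (hE : IsEigenProj L θ E) (a b : V) :
    E *ᵥ pairState a b = 0 ↔ ∀ u, L *ᵥ u = (θ : ℂ) • u → u a = u b := by
  simp only [hE.mulVec_eq_zero_iff, dotProduct_pairState, Pi.star_apply, sub_eq_zero,
    star_inj]

end IsEigenProj

open SimpleGraph in
theorem edge_transitive_support_general [Fintype V] [DecidableEq V] (G : SimpleGraph V)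
    [DecidableRel G.Adj]
    (hET : ∀ e ∈ G.edgeSet, ∀ f ∈ G.edgeSet, ∃ σ : G ≃g G, Sym2.map σ e = f)
    (a b : V) (hab : G.Adj a b) :
    ∀ θ : ℝ, (∃ v : V → ℂ, v ≠ 0 ∧ (G.lapMatrix ℂ).mulVec v = (θ : ℂ) • v) →
      ∀ E : Matrix V V ℂ, IsEigenProj (G.lapMatrix ℂ) θ E →
        (E.mulVec (pairState a b) ≠ 0 ↔ θ ≠ 0) := by
  rintro θ ⟨v, hv0, hv⟩ E hE
  rw [ne_eq, hE.mulVec_pairState_eq_zero_iff, not_iff_not]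
  constructor
  · intro hab_eq
    have hker : G.lapMatrix ℂ *ᵥ v = 0 :=
      (lapMatrix_mulVec_eq_zero_iff_forall_adj_complex G).2 fun c d hcd ↦
        IsEdgeTransitive.eq_of_adj hET
          (fun σ u hu ↦ by rw [lapMatrix_mulVec_comp_iso, hu]; rfl) hab hab_eq hv hcd
    rw [hker, eq_comm, smul_eq_zero] at hv
    exact_mod_cast hv.resolve_right hv0
  · rintro rfl u hu
    rw [Complex.ofReal_zero, zero_smul, lapMatrix_mulVec_eq_zero_iff_forall_adj_complex] at hu
    exact hu a b hab

/-- In a connected edge-transitive graph, the eigenvalue support of an edge state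
consists exactly of the nonzero Laplacian eigenvalues. -/
theorem edge_transitive_support [Fintype V] [DecidableEq V] (G : SimpleGraph V)
    [DecidableRel G.Adj] (hconn : G.Connected)
    (hET : ∀ e ∈ G.edgeSet, ∀ f ∈ G.edgeSet, ∃ σ : G ≃g G, Sym2.map σ e = f)
    (a b : V) (hab : G.Adj a b) :
    ∀ θ : ℝ, (∃ v : V → ℂ, v ≠ 0 ∧ (G.lapMatrix ℂ).mulVec v = (θ : ℂ) • v) →
      ∀ E : Matrix V V ℂ, IsEigenProj (G.lapMatrix ℂ) θ E →
        (E.mulVec (pairState a b) ≠ 0 ↔ θ ≠ 0) :=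
  edge_transitive_support_general G hET a b hab
end

section
/- Let G and H be finite simple graphs, let a ≠ b and c ≠ d be vertices of G, and let α ≠ β and γ ≠ κ be vertices of H. In the Cartesian product G □ H, there exists a complex scalar μ with |μ| = 1 such that U_{G□H}(t)((e_a − e_b) ⊗ (e_α − e_β)) = μ ((e_c − e_d) ⊗ (e_γ − e_κ)) if and only if both of the following hold: (i) there is perfect pair state transfer from (a,b) to (c,d) in G at time t, and (ii) there is perfect pair state transfer from (α,β) to (γ,κ) in H at time t. -/
open Matrix

variable {V : Type*}

instance {W X : Type*} (G : SimpleGraph W) (H : SimpleGraph X)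
    [DecidableRel G.Adj] [DecidableRel H.Adj] [DecidableEq W] [DecidableEq X] :
    DecidableRel (G.boxProd H).Adj := fun _ _ =>
  decidable_of_iff _ (SimpleGraph.boxProd_adj).symm

/-- The tensor product of two vectors. -/
def tensorVec {W X : Type*} (x : W → ℂ) (y : X → ℂ) : W × X → ℂ := fun p => x p.1 * y p.2

/-!
The Laplacian of `G □ H` is the Kronecker sum `L_G ⊗ 1 + 1 ⊗ L_H` of two commuting matrices, so
`U_{G□H}(t) = U_G(t) ⊗ U_H(t)` sends `x ⊗ y` to `U_G(t) x ⊗ U_H(t) y`. A product vector `p ⊗ q`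
is a nonzero multiple of `u ⊗ v` only if `p` and `q` are multiples of `u` and `v`; as the
transition matrices are unitary and all pair states have the same norm, these multiples have
modulus one. Conversely, the phases of the two factors multiply.
-/

open NormedSpace
open scoped Kronecker

namespace Matrix

variable {𝕜 m n : Type*} [RCLike 𝕜] [Fintype m] [DecidableEq m] [Fintype n] [DecidableEq n]

noncomputable def kroneckerOneAlgHom : Matrix m m 𝕜 →ₐ[𝕜] Matrix (m × n) (m × n) 𝕜 :=
  AlgHom.ofLinearMap ((kroneckerBilinear (R := 𝕜)).flip 1) (one_kronecker_one (α := 𝕜))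
    fun A B => by
      change (A * B) ⊗ₖ (1 : Matrix n n 𝕜) = A ⊗ₖ 1 * B ⊗ₖ 1
      rw [← mul_kronecker_mul, mul_one]

noncomputable def oneKroneckerAlgHom : Matrix n n 𝕜 →ₐ[𝕜] Matrix (m × n) (m × n) 𝕜 :=
  AlgHom.ofLinearMap (kroneckerBilinear (R := 𝕜) 1) (one_kronecker_one (α := 𝕜))
    fun A B => by
      change (1 : Matrix m m 𝕜) ⊗ₖ (A * B) = 1 ⊗ₖ A * 1 ⊗ₖ B
      rw [← mul_kronecker_mul, mul_one]

section Exp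

variable [NormedAlgebra ℚ 𝕜]

-- `exp` only depends on the topology, so any algebra norm inducing it may be used.
open scoped Norms.Operator in
theorem exp_map_algHom (φ : Matrix m m 𝕜 →ₐ[𝕜] Matrix n n 𝕜) (A : Matrix m m 𝕜) :
    exp (φ A) = φ (exp A) :=
  (map_exp φ φ.toLinearMap.continuous_of_finiteDimensional A).symm

theorem exp_kronecker_one (A : Matrix m m 𝕜) :
    exp (A ⊗ₖ (1 : Matrix n n 𝕜)) = exp A ⊗ₖ (1 : Matrix n n 𝕜) :=
  exp_map_algHom kroneckerOneAlgHom A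

theorem exp_one_kronecker (B : Matrix n n 𝕜) :
    exp ((1 : Matrix m m 𝕜) ⊗ₖ B) = (1 : Matrix m m 𝕜) ⊗ₖ exp B :=
  exp_map_algHom oneKroneckerAlgHom B

theorem exp_kronecker_one_add_one_kronecker (A : Matrix m m 𝕜) (B : Matrix n n 𝕜) :
    exp (A ⊗ₖ (1 : Matrix n n 𝕜) + (1 : Matrix m m 𝕜) ⊗ₖ B) = exp A ⊗ₖ exp B := by
  have hcomm : Commute (A ⊗ₖ (1 : Matrix n n 𝕜)) ((1 : Matrix m m 𝕜) ⊗ₖ B) := by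
    simp only [Commute, SemiconjBy, ← mul_kronecker_mul, one_mul, mul_one]
  rw [exp_add_of_commute _ _ hcomm, exp_kronecker_one, exp_one_kronecker, ← mul_kronecker_mul,
    one_mul, mul_one]

end Exp

theorem star_mulVec_dotProduct_mulVec_of_mem_unitaryGroup {U : Matrix n n 𝕜}
    (hU : U ∈ unitaryGroup n 𝕜) (x : n → 𝕜) : star (U *ᵥ x) ⬝ᵥ (U *ᵥ x) = star x ⬝ᵥ x := by
  rw [star_mulVec, dotProduct_mulVec, vecMul_vecMul, ← star_eq_conjTranspose,
    (mem_unitaryGroup_iff'.mp hU), vecMul_one]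

theorem norm_eq_one_of_mulVec_eq_smul {U : Matrix n n 𝕜} (hU : U ∈ unitaryGroup n 𝕜)
    {x y : n → 𝕜} {s : 𝕜} (hxy : star x ⬝ᵥ x = star y ⬝ᵥ y) (hy : star y ⬝ᵥ y ≠ 0)
    (h : U *ᵥ x = s • y) : ‖s‖ = 1 := by
  have hnorm := star_mulVec_dotProduct_mulVec_of_mem_unitaryGroup hU x
  rw [h, hxy, star_smul, smul_dotProduct, dotProduct_smul, smul_smul, smul_eq_mul] at hnorm
  have hs : star s * s = 1 := (mul_eq_right₀ hy).mp hnorm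
  rw [RCLike.star_def, RCLike.conj_mul] at hs
  exact_mod_cast (pow_eq_one_iff_of_nonneg (norm_nonneg s) two_ne_zero).mp (by exact_mod_cast hs)

end Matrix

namespace SimpleGraph

variable {R W X : Type*} [DecidableEq W] [DecidableEq X]
  (G : SimpleGraph W) (H : SimpleGraph X) [DecidableRel G.Adj] [DecidableRel H.Adj]

theorem adjMatrix_boxProd [Semiring R] :
    (G.boxProd H).adjMatrix R =
      G.adjMatrix R ⊗ₖ (1 : Matrix X X R) + (1 : Matrix W W R) ⊗ₖ H.adjMatrix R := by
  ext ⟨i, j⟩ ⟨k, l⟩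
  by_cases hik : i = k <;> by_cases hjl : j = l <;>
    simp [adjMatrix_apply, one_apply, boxProd_adj, hik, hjl]

variable [Fintype W] [Fintype X]

theorem degMatrix_boxProd [Semiring R] :
    (G.boxProd H).degMatrix R =
      G.degMatrix R ⊗ₖ (1 : Matrix X X R) + (1 : Matrix W W R) ⊗ₖ H.degMatrix R := by
  ext ⟨i, j⟩ ⟨k, l⟩
  by_cases hik : i = k <;> by_cases hjl : j = l <;>
    simp [degMatrix, degree_boxProd, one_apply, hik, hjl]

theorem lapMatrix_boxProd [Ring R] :
    (G.boxProd H).lapMatrix R =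
      G.lapMatrix R ⊗ₖ (1 : Matrix X X R) + (1 : Matrix W W R) ⊗ₖ H.lapMatrix R := by
  ext ⟨i, j⟩ ⟨k, l⟩
  simp only [lapMatrix, degMatrix_boxProd, adjMatrix_boxProd, Matrix.sub_apply, Matrix.add_apply,
    kroneckerMap_apply, sub_mul, mul_sub]
  abel

theorem transitionMatrix_boxProd (t : ℝ) :
    transitionMatrix (G.boxProd H) t = transitionMatrix G t ⊗ₖ transitionMatrix H t := by
  rw [transitionMatrix, lapMatrix_boxProd, smul_add, ← smul_kronecker, ← kronecker_smul,
    exp_kronecker_one_add_one_kronecker]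
  rfl

theorem transitionMatrix_mem_unitaryGroup (t : ℝ) :
    transitionMatrix G t ∈ unitaryGroup W ℂ := by
  have hskew : ((Complex.I * t) • G.lapMatrix ℂ)ᴴ = -((Complex.I * t) • G.lapMatrix ℂ) := by
    rw [conjTranspose_smul, (G.isHermitian_lapMatrix ℂ).eq, ← neg_smul]
    congr 1
    simp [Complex.conj_ofReal]
  rw [mem_unitaryGroup_iff', star_eq_conjTranspose, transitionMatrix, ← exp_conjTranspose, hskew,
    ← Matrix.exp_add_of_commute _ _ (Commute.refl ((Complex.I * t) • G.lapMatrix ℂ)).neg_left,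
    neg_add_cancel, exp_zero]

end SimpleGraph

section PairState

variable {V : Type*} [DecidableEq V] {a b : V}

theorem pairState_apply_left (hab : a ≠ b) : pairState a b a = 1 := by
  simp [pairState, hab]

theorem star_pairState_dotProduct_pairState [Fintype V] (hab : a ≠ b) :
    star (pairState a b) ⬝ᵥ pairState a b = 2 := by
  norm_num [pairState, dotProduct_sub, dotProduct_single, hab, hab.symm]

end PairState

section TensorVec

variable {W X : Type*}

theorem tensorVec_smul_smul (r s : ℂ) (x : W → ℂ) (y : X → ℂ) :
    tensorVec (r • x) (s • y) = (r * s) • tensorVec x y := by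
  ext
  simp only [tensorVec, Pi.smul_apply, smul_eq_mul]
  ring

theorem eq_smul_of_tensorVec_eq_smul {p u : W → ℂ} {q v : X → ℂ} {μ : ℂ} (hμ : μ ≠ 0)
    {c : W} {γ : X} (hc : u c = 1) (hγ : v γ = 1) (h : tensorVec p q = μ • tensorVec u v) :
    p = p c • u ∧ q = q γ • v := by
  have hpq (i : W) (j : X) : p i * q j = μ * (u i * v j) := congrFun h (i, j)
  have hμ' : p c * q γ = μ := by simpa [hc, hγ] using hpq c γ
  have hpc : p c ≠ 0 := left_ne_zero_of_mul (hμ'.symm ▸ hμ)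
  have hqγ : q γ ≠ 0 := right_ne_zero_of_mul (hμ'.symm ▸ hμ)
  refine ⟨funext fun i => mul_right_cancel₀ hqγ ?_, funext fun j => mul_left_cancel₀ hpc ?_⟩
  · simp only [Pi.smul_apply, smul_eq_mul]
    rw [hpq, hγ, ← hμ']
    ring
  · simp only [Pi.smul_apply, smul_eq_mul]
    rw [hpq, hc, ← hμ']
    ring

theorem kronecker_mulVec_tensorVec [Fintype W] [Fintype X] (A : Matrix W W ℂ)
    (B : Matrix X X ℂ) (x : W → ℂ) (y : X → ℂ) :
    (A ⊗ₖ B) *ᵥ tensorVec x y = tensorVec (A *ᵥ x) (B *ᵥ y) := by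
  ext ⟨i, j⟩
  simp only [mulVec, dotProduct, tensorVec, kroneckerMap_apply, Fintype.sum_prod_type,
    Finset.sum_mul_sum]
  exact Finset.sum_congr rfl fun k _ => Finset.sum_congr rfl fun l _ => by ring

end TensorVec

theorem PerfectPairStateTransfer.of_mulVec_eq_smul {V : Type*} [Fintype V] [DecidableEq V]
    {G : SimpleGraph V} [DecidableRel G.Adj] {t : ℝ} {a b c d : V} (hab : a ≠ b) (hcd : c ≠ d)
    {s : ℂ} (h : transitionMatrix G t *ᵥ pairState a b = s • pairState c d) :
    PerfectPairStateTransfer G t a b c d := by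
  refine ⟨s, norm_eq_one_of_mulVec_eq_smul (G.transitionMatrix_mem_unitaryGroup t) ?_ ?_ h, h⟩
  · rw [star_pairState_dotProduct_pairState hab, star_pairState_dotProduct_pairState hcd]
  · rw [star_pairState_dotProduct_pairState hcd]
    exact two_ne_zero

/-- Perfect pair state transfer in a Cartesian product between tensor-product pair
states holds exactly when there is perfect pair state transfer in each factor at the
same time. -/
theorem pst_boxProd {W X : Type*} [Fintype W] [DecidableEq W] [Fintype X] [DecidableEq X]
    (G : SimpleGraph W) (H : SimpleGraph X) [DecidableRel G.Adj] [DecidableRel H.Adj]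
    (a b c d : W) (hab : a ≠ b) (hcd : c ≠ d)
    (α β γ κ : X) (hαβ : α ≠ β) (hγκ : γ ≠ κ) (t : ℝ) :
    (∃ μ : ℂ, ‖μ‖ = 1 ∧
        (transitionMatrix (G.boxProd H) t).mulVec
            (tensorVec (pairState a b) (pairState α β)) =
          μ • tensorVec (pairState c d) (pairState γ κ)) ↔
      PerfectPairStateTransfer G t a b c d ∧ PerfectPairStateTransfer H t α β γ κ := by
  rw [G.transitionMatrix_boxProd H, kronecker_mulVec_tensorVec]
  constructor
  · rintro ⟨μ, hμ, h⟩
    have hμ0 : μ ≠ 0 := norm_ne_zero_iff.mp (hμ ▸ one_ne_zero)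
    obtain ⟨hG, hH⟩ :=
      eq_smul_of_tensorVec_eq_smul hμ0 (pairState_apply_left hcd) (pairState_apply_left hγκ) h
    exact ⟨.of_mulVec_eq_smul hab hcd hG, .of_mulVec_eq_smul hαβ hγκ hH⟩
  · rintro ⟨⟨s, hs, hG⟩, r, hr, hH⟩
    refine ⟨s * r, by rw [norm_mul, hs, hr, one_mul], ?_⟩
    rw [hG, hH, tensorVec_smul_smul]
end

section
/- Let G be a finite simple bipartite graph with bipartition (B₁, B₂) (every edge of G has one end in B₁ and one end in B₂), and let a, c ∈ B₁ and b, d ∈ B₂. For every time t, there is perfect pair state transfer between e_a − e_b and e_c − e_d at time t (i.e., exp(itL)(e_a − e_b) = γ(e_c − e_d) for some γ ∈ ℂ with |γ| = 1, where L = Δ − A is the Laplacian) if and only if there is perfect plus state transfer between e_a + e_b and e_c + e_d at time t (i.e., exp(itL₊)(e_a + e_b) = γ′(e_c + e_d) for some γ′ ∈ ℂ with |γ′| = 1, where L₊ = Δ + A is the unsigned Laplacian). -/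
open Matrix

variable {V : Type*}

/-- The transition matrix `exp(itL₊)` of the walk generated by the unsigned (signless)
Laplacian `L₊ = Δ + A` of `G`. -/
noncomputable def transitionMatrixPlus [Fintype V] [DecidableEq V] (G : SimpleGraph V)
    [DecidableRel G.Adj] (t : ℝ) : Matrix V V ℂ :=
  NormedSpace.exp ((Complex.I * (t : ℂ)) • (G.degMatrix ℂ + G.adjMatrix ℂ))

/-- The plus state `e_a + e_b`. -/
def plusState [DecidableEq V] (a b : V) : V → ℂ := Pi.single a 1 + Pi.single b 1

/-!
Conjugating by the diagonal sign matrix `S` of the bipartition (`+1` on `B₁`, `-1` on `B₂`)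
fixes the degree matrix and negates the adjacency matrix, so `S L S = L₊`. Since `S² = 1`,
this gives `exp(itL₊) = S exp(itL) S`, while `S` swaps `e_x - e_y` and `e_x + e_y` whenever
`x ∈ B₁` and `y ∈ B₂`.
-/

section

variable [Fintype V] [DecidableEq V]

section SignMatrix

variable (R : Type*) [Ring R] (B : Set V) [DecidablePred (· ∈ B)]

def signMatrix : Matrix V V R :=
  diagonal fun v => if v ∈ B then 1 else -1

variable {R B}

theorem signMatrix_mul_self : signMatrix R B * signMatrix R B = 1 := by
  rw [signMatrix, diagonal_mul_diagonal, ← diagonal_one]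
  congr 1
  funext v
  split_ifs <;> simp

theorem signMatrix_mul_degMatrix_mul_signMatrix (G : SimpleGraph V) [DecidableRel G.Adj] :
    signMatrix R B * G.degMatrix R * signMatrix R B = G.degMatrix R := by
  rw [signMatrix, SimpleGraph.degMatrix, diagonal_mul_diagonal, diagonal_mul_diagonal]
  congr 1
  funext v
  split_ifs <;> simp

theorem signMatrix_mul_adjMatrix_mul_signMatrix {G : SimpleGraph V} [DecidableRel G.Adj]
    (hB : ∀ u v, G.Adj u v → (u ∈ B ↔ v ∉ B)) :
    signMatrix R B * G.adjMatrix R * signMatrix R B = -G.adjMatrix R := by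
  ext u v
  simp only [signMatrix, mul_diagonal, diagonal_mul, SimpleGraph.adjMatrix_apply]
  by_cases huv : G.Adj u v
  · have := hB u v huv
    split_ifs <;> simp_all
  · simp [huv]

theorem signMatrix_mul_lapMatrix_mul_signMatrix {G : SimpleGraph V} [DecidableRel G.Adj]
    (hB : ∀ u v, G.Adj u v → (u ∈ B ↔ v ∉ B)) :
    signMatrix R B * G.lapMatrix R * signMatrix R B = G.degMatrix R + G.adjMatrix R := by
  rw [SimpleGraph.lapMatrix, mul_sub, sub_mul, signMatrix_mul_degMatrix_mul_signMatrix,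
    signMatrix_mul_adjMatrix_mul_signMatrix hB, sub_neg_eq_add]

end SignMatrix

theorem Matrix.exp_conj_of_mul_self_eq_one {𝔸 : Type*} [NormedRing 𝔸] [NormedAlgebra ℚ 𝔸]
    [CompleteSpace 𝔸] {S : Matrix V V 𝔸} (hS : S * S = 1) (M : Matrix V V 𝔸) :
    NormedSpace.exp (S * M * S) = S * NormedSpace.exp M * S :=
  Matrix.exp_units_conj ⟨S, S, hS, hS⟩ M

theorem Matrix.conj_mulVec_mulVec_eq_smul_iff {R : Type*} [CommRing R] {S : Matrix V V R}
    (hS : S * S = 1) (M : Matrix V V R) (u w : V → R) (γ : R) :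
    (S * M * S) *ᵥ (S *ᵥ u) = γ • (S *ᵥ w) ↔ M *ᵥ u = γ • w := by
  have hinj : Function.Injective (S *ᵥ ·) :=
    Function.LeftInverse.injective (g := (S *ᵥ ·)) fun x => by simp [mulVec_mulVec, hS]
  rw [mulVec_mulVec, Matrix.mul_assoc, hS, Matrix.mul_one, ← mulVec_mulVec, ← mulVec_smul]
  exact hinj.eq_iff

theorem signMatrix_mulVec_pairState {B : Set V} [DecidablePred (· ∈ B)] {x y : V}
    (hx : x ∈ B) (hy : y ∉ B) : signMatrix ℂ B *ᵥ pairState x y = plusState x y := by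
  have hxy : x ≠ y := fun h => hy (h ▸ hx)
  funext v
  simp only [signMatrix, mulVec_diagonal, pairState, plusState, Pi.sub_apply, Pi.add_apply,
    Pi.single_apply]
  by_cases hvx : v = x
  · subst hvx
    simp [hx, hxy]
  · split_ifs <;> simp_all

theorem transitionMatrixPlus_eq_signMatrix_conj {G : SimpleGraph V} [DecidableRel G.Adj]
    {B : Set V} [DecidablePred (· ∈ B)] (hB : ∀ u v, G.Adj u v → (u ∈ B ↔ v ∉ B)) (t : ℝ) :
    transitionMatrixPlus G t = signMatrix ℂ B * transitionMatrix G t * signMatrix ℂ B := by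
  rw [transitionMatrixPlus, transitionMatrix, ← signMatrix_mul_lapMatrix_mul_signMatrix hB,
    ← smul_mul_assoc, ← mul_smul_comm, exp_conj_of_mul_self_eq_one signMatrix_mul_self]

end

theorem bipartite_pair_iff_plus_general [Fintype V] [DecidableEq V] (G : SimpleGraph V)
    [DecidableRel G.Adj] (B₁ B₂ : Set V)
    (hdisj : B₁ ∩ B₂ = ∅)
    (hbip : ∀ u v : V, G.Adj u v → (u ∈ B₁ ∧ v ∈ B₂) ∨ (u ∈ B₂ ∧ v ∈ B₁))
    (a c : V) (ha : a ∈ B₁) (hc : c ∈ B₁) (b d : V) (hb : b ∈ B₂) (hd : d ∈ B₂) (t : ℝ) :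
    PerfectPairStateTransfer G t a b c d ↔
      ∃ γ' : ℂ, ‖γ'‖ = 1 ∧
        (transitionMatrixPlus G t).mulVec (plusState a b) = γ' • plusState c d := by
  classical
  have hB₂ : ∀ v ∈ B₂, v ∉ B₁ := fun v h₂ h₁ => Set.eq_empty_iff_forall_notMem.1 hdisj v ⟨h₁, h₂⟩
  have hcross : ∀ u v, G.Adj u v → (u ∈ B₁ ↔ v ∉ B₁) := by
    intro u v huv
    rcases hbip u v huv with ⟨hu, hv⟩ | ⟨hu, hv⟩
    · exact iff_of_true hu (hB₂ v hv)
    · exact iff_of_false (hB₂ u hu) (not_not_intro hv)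
  rw [transitionMatrixPlus_eq_signMatrix_conj hcross, ← signMatrix_mulVec_pairState ha (hB₂ b hb),
    ← signMatrix_mulVec_pairState hc (hB₂ d hd)]
  simp only [conj_mulVec_mulVec_eq_smul_iff signMatrix_mul_self, PerfectPairStateTransfer]

/-- In a bipartite graph (with `a, c` in one part and `b, d` in the other), perfect
Laplacian pair state transfer is equivalent to perfect unsigned-Laplacian plus state
transfer. -/
theorem bipartite_pair_iff_plus [Fintype V] [DecidableEq V] (G : SimpleGraph V)
    [DecidableRel G.Adj] (B₁ B₂ : Set V)
    (hunion : B₁ ∪ B₂ = Set.univ) (hdisj : B₁ ∩ B₂ = ∅)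
    (hbip : ∀ u v : V, G.Adj u v → (u ∈ B₁ ∧ v ∈ B₂) ∨ (u ∈ B₂ ∧ v ∈ B₁))
    (a c : V) (ha : a ∈ B₁) (hc : c ∈ B₁) (b d : V) (hb : b ∈ B₂) (hd : d ∈ B₂) (t : ℝ) :
    PerfectPairStateTransfer G t a b c d ↔
      ∃ γ' : ℂ, ‖γ'‖ = 1 ∧
        (transitionMatrixPlus G t).mulVec (plusState a b) = γ' • plusState c d :=
  bipartite_pair_iff_plus_general G B₁ B₂ hdisj hbip a c ha hc b d hb hd t
end
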